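/- arXiv:2101.11078 — 5 statements merged into one kernel-verified Lean document; each statement's English description precedes it below -/
import Mathlib

section
/- Let a_1,...,a_v be pairwise disjoint adjacentable sequences and d_1,...,d_p be pairwise disjoint h-ordered strictly-h-increasing 'descending' sequences (sequences where no earlier element is below a later one in P) such that no two of the d_j are semi-overlapping. Then the total number of elements in the union of the d_j satisfies |d_1| + ... + |d_p| ≤ n + vp − (asc(a_1) + ... + asc(a_v)). In particular, D'_p + A'_v ≤ n + vp for all p, v ≥ 0. -/
variable {α : Type*}

/-- `asc(S)`: one plus the number of consecutive ascents (in the partial order),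
`0` for the empty sequence. -/
noncomputable def ascCount [Preorder α] (l : List α) : ℕ :=
  if l.isEmpty then 0 else 1 + Nat.card {p : α × α // p ∈ l.zip l.tail ∧ p.1 < p.2}

/-- `desc(S)`: the length of the longest subsequence in which no earlier element
is strictly below a later one. -/
noncomputable def descCount [Preorder α] (l : List α) : ℕ :=
  sSup {m | ∃ t : List α, t.Sublist l ∧ t.Pairwise (fun a b => ¬ a < b) ∧ t.length = m}

/-- A sequence of distinct elements is adjacentable if every consecutive pair lies in `C`. -/
def IsAdjacentable (C : α → α → Prop) (l : List α) : Prop :=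
  l.Nodup ∧ l.Chain' C

/-- A sequence of distinct elements is `h`-ordered if `h` strictly increases along it. -/
def IsHOrdered {n : ℕ} (h : α ≃ Fin n) (l : List α) : Prop :=
  l.Nodup ∧ l.Chain' (fun a b => h a < h b)

/-- Two sequences are semi-overlapping if each contains an element `C`-below an
element of the other. -/
def SemiOverlapping (C : α → α → Prop) (s t : List α) : Prop :=
  (∃ x ∈ s, ∃ y ∈ t, C y x) ∧ (∃ x ∈ s, ∃ y ∈ t, C x y)

/-- A family of pairwise disjoint sequences. -/
def FamilyDisjoint {k : ℕ} (S : Fin k → List α) : Prop :=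
  ∀ i j, i ≠ j → ∀ x, x ∈ S i → x ∉ S j

/-- `A'_k`: the maximum of `asc(S₁) + ⋯ + asc(S_k)` over `k` pairwise disjoint
adjacentable sequences. -/
noncomputable def Aval [Preorder α] (C : α → α → Prop) (k : ℕ) : ℕ :=
  sSup {m | ∃ S : Fin k → List α, (∀ i, IsAdjacentable C (S i)) ∧ FamilyDisjoint S ∧
    m = ∑ i, ascCount (S i)}

/-- `D'_k`: the maximum of `desc(S₁) + ⋯ + desc(S_k)` over `k` pairwise disjoint,
pairwise non-semi-overlapping `h`-ordered sequences. -/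
noncomputable def Dval [Preorder α] {n : ℕ} (h : α ≃ Fin n) (C : α → α → Prop) (k : ℕ) : ℕ :=
  sSup {m | ∃ S : Fin k → List α, (∀ i, IsHOrdered h (S i)) ∧ FamilyDisjoint S ∧
    (∀ i j, i ≠ j → ¬ SemiOverlapping C (S i) (S j)) ∧ m = ∑ i, descCount (S i)}

/-- `f` (with `f k` playing the role of `λ_{k+1}`) is a partition of `n`. -/
def IsPartitionOf (n : ℕ) (f : ℕ → ℕ) : Prop :=
  (∀ k, f (k + 1) ≤ f k) ∧ ∃ N, (∑ k ∈ Finset.range N, f k = n) ∧ ∀ k, N ≤ k → f k = 0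

/-- `f` and `g` are conjugate partitions of `n` (indexed from `0`, so `f k = λ_{k+1}`):
`μ_j = #{i : λ_i ≥ j}`. -/
def ConjugatePartitions (n : ℕ) (f g : ℕ → ℕ) : Prop :=
  IsPartitionOf n f ∧ IsPartitionOf n g ∧ ∀ j, g j = Nat.card {i : ℕ | j + 1 ≤ f i}

/-!
Along an adjacentable sequence `l` every element is `C`-below all later ones. If `x ∈ d_j` is
followed in `l` by another element of `d_j`, then the ascending run of `l` starting at `x`
contains no further element of `⋃ d_k` (one from `d_j` would contradict descent, one from
`d_k`, `k ≠ j`, would make `d_j` and `d_k` semi-overlap), so it ends at a non-ascent before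
that later element. Charging each such `x` to that non-ascent, all elements of `l ∩ ⋃ d_k`
but the last one from each `d_j` are paid for by distinct non-ascents, whence
`asc(l) ≤ |l \ ⋃ d_k| + p`; summing over the disjoint `a_i` gives the first bound.
The bound on `D'_p + A'_v` follows by applying it to longest descending subsequences.
-/

open Finset

section Ascents

variable [Preorder α] [DecidableLT α]

def nonAscents (l : List α) : ℕ :=
  (l.zip l.tail).countP fun q => ¬ q.1 < q.2

lemma nonAscents_cons_cons (x y : α) (l : List α) :
    nonAscents (x :: y :: l) = nonAscents (y :: l) + if x < y then 0 else 1 := by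
  simp [nonAscents, List.countP_cons]

lemma ascCount_add_nonAscents {l : List α} (hl : l.Nodup) (hne : l ≠ []) :
    ascCount l + nonAscents l = l.length := by
  classical
  have hzip : (l.zip l.tail).Nodup :=
    .of_map Prod.snd (by rw [List.map_snd_zip (by simp)]; exact hl.sublist l.tail_sublist)
  have hcard : Nat.card {q : α × α // q ∈ l.zip l.tail ∧ q.1 < q.2} =
      (l.zip l.tail).countP fun q => q.1 < q.2 := by
    rw [← hzip.card_eq_countP, ← Nat.card_eq_finsetCard]
    exact Nat.card_congr (Equiv.subtypeEquivRight (by simp))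
  have hlen : 0 < l.length := List.length_pos_iff.mpr hne
  have hsplit : ((l.zip l.tail).countP fun q => q.1 < q.2) + nonAscents l =
      (l.zip l.tail).length := by
    rw [List.length_eq_countP_add_countP (fun q : α × α => decide (q.1 < q.2))]
    simp [nonAscents]
  rw [ascCount, if_neg (by simpa using hne), hcard, add_assoc, hsplit, List.length_zip,
    List.length_tail]
  omega

end Ascents

section Meets

variable {ι : Type*} [Fintype ι] [DecidableEq α] {d : ι → List α}

def meets (d : ι → List α) (l : List α) : Finset ι :=
  {j | ∃ x ∈ l, x ∈ d j}

lemma meets_subset_meets_cons (x : α) (l : List α) : meets d l ⊆ meets d (x :: l) :=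
  fun j => by simp +contextual [meets]

lemma card_meets_lt_cons {x : α} {l : List α} {j : ι} (hx : x ∈ d j)
    (hl : ¬ ∃ m ∈ l, m ∈ d j) : #(meets d l) < #(meets d (x :: l)) := by
  refine card_lt_card <| (ssubset_iff_of_subset (meets_subset_meets_cons x l)).mpr ⟨j, ?_, ?_⟩
  · simp only [meets, mem_filter, mem_univ, true_and, List.mem_cons]
    exact ⟨x, .inl rfl, hx⟩
  · simpa [meets] using hl

end Meets

/-- The first maximal ascending run of the list contains no element satisfying `P`, and it is
followed by a non-ascent. -/
def FirstRunAvoids [LT α] (P : α → Prop) : List α → Prop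
  | x :: y :: l => ¬ P x ∧ (x < y → FirstRunAvoids P (y :: l))
  | _ => False

section Runs

variable [Preorder α] {ι : Type*} {C : α → α → Prop} {d : ι → List α}

lemma not_exists_mem_of_lt (hdesc : ∀ j, ∀ x ∈ d j, ∀ y ∈ d j, C x y → ¬ x < y)
    (hso : ∀ j j', j ≠ j' → ¬ SemiOverlapping C (d j) (d j'))
    {x y : α} {r : List α} {j : ι} (hx : x ∈ d j) (hxy : x < y)
    (hC : (x :: y :: r).Pairwise C) (hm : ∃ m ∈ y :: r, m ∈ d j) : ¬ ∃ j', y ∈ d j' := by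
  rintro ⟨j', hyj'⟩
  obtain ⟨m, hm, hmj⟩ := hm
  have hCxy : C x y := List.rel_of_pairwise_cons hC List.mem_cons_self
  obtain rfl | hm := List.mem_cons.mp hm
  · exact hdesc j x hx m hmj hCxy hxy
  obtain rfl | hj := eq_or_ne j j'
  · exact hdesc j x hx y hyj' hCxy hxy
  · exact hso j j' hj ⟨⟨m, hmj, y, hyj', List.rel_of_pairwise_cons hC.of_cons hm⟩,
      ⟨x, hx, y, hyj', hCxy⟩⟩

lemma firstRunAvoids_of_lt (hdesc : ∀ j, ∀ x ∈ d j, ∀ y ∈ d j, C x y → ¬ x < y)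
    (hso : ∀ j j', j ≠ j' → ¬ SemiOverlapping C (d j) (d j'))
    {x y : α} {r : List α} {j : ι} (hx : x ∈ d j) (hxy : x < y)
    (hC : (x :: y :: r).Pairwise C) (hm : ∃ m ∈ y :: r, m ∈ d j) :
    FirstRunAvoids (fun z => ∃ j, z ∈ d j) (y :: r) := by
  induction r generalizing y with
  | nil =>
    obtain ⟨m, hm, hmj⟩ := hm
    exact (not_exists_mem_of_lt hdesc hso hx hxy hC ⟨m, hm, hmj⟩
      ⟨j, List.mem_singleton.mp hm ▸ hmj⟩).elim
  | cons z r ih =>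
    have hy := not_exists_mem_of_lt hdesc hso hx hxy hC hm
    refine ⟨hy, fun hyz => ih (hxy.trans hyz) (hC.sublist (.cons_cons x (.cons y (.refl _)))) ?_⟩
    obtain ⟨m, hm, hmj⟩ := hm
    exact ⟨m, (List.mem_cons.mp hm).resolve_left (by rintro rfl; exact hy ⟨j, hmj⟩), hmj⟩

lemma countP_le_card_meets_add_nonAscents [Fintype ι] [DecidableEq α] [DecidableLT α]
    (hdesc : ∀ j, ∀ x ∈ d j, ∀ y ∈ d j, C x y → ¬ x < y)
    (hso : ∀ j j', j ≠ j' → ¬ SemiOverlapping C (d j) (d j')) {l : List α}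
    (hC : l.Pairwise C) :
    l.countP (fun z => ∃ j, z ∈ d j) ≤ #(meets d l) + nonAscents l ∧
      (FirstRunAvoids (fun z => ∃ j, z ∈ d j) l →
        l.countP (fun z => ∃ j, z ∈ d j) + 1 ≤ #(meets d l) + nonAscents l) := by
  induction l with
  | nil => simp [FirstRunAvoids]
  | cons x l ih =>
    cases l with
    | nil =>
      refine ⟨?_, False.elim⟩
      rw [List.countP_singleton]
      split_ifs with hPx
      · obtain ⟨j, hxj⟩ := of_decide_eq_true hPx
        exact (Nat.one_le_of_lt (card_meets_lt_cons (l := []) hxj (by simp))).trans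
          (Nat.le_add_right _ _)
      · exact Nat.zero_le _
    | cons y r =>
      obtain ⟨ihA, ihB⟩ := ih hC.of_cons
      have hmono := card_le_card (meets_subset_meets_cons (d := d) x (y :: r))
      rw [List.countP_cons, nonAscents_cons_cons]
      by_cases hPx : ∃ j, x ∈ d j
      · refine ⟨?_, fun hF => absurd hPx hF.1⟩
        simp only [hPx, decide_true, if_true]
        obtain ⟨j, hxj⟩ := hPx
        by_cases hm : ∃ m ∈ y :: r, m ∈ d j
        · split_ifs with hxy
          · have := ihB (firstRunAvoids_of_lt hdesc hso hxj hxy hC hm)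
            omega
          · omega
        · have := card_meets_lt_cons hxj hm
          split_ifs <;> omega
      · rw [if_neg (by simpa using hPx)]
        by_cases hxy : x < y
        · rw [if_pos hxy]
          exact ⟨by omega, fun hF => by have := ihB (hF.2 hxy); omega⟩
        · rw [if_neg hxy]
          exact ⟨by omega, fun _ => by omega⟩

lemma ascCount_le_countP_not_add [Fintype ι] [DecidableEq α]
    (hdesc : ∀ j, ∀ x ∈ d j, ∀ y ∈ d j, C x y → ¬ x < y)
    (hso : ∀ j j', j ≠ j' → ¬ SemiOverlapping C (d j) (d j')) {l : List α}
    (hl : l.Nodup) (hC : l.Pairwise C) :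
    ascCount l ≤ l.countP (fun z => ¬ ∃ j, z ∈ d j) + Fintype.card ι := by
  classical
  rcases eq_or_ne l [] with rfl | hne
  · simp [ascCount]
  have hasc := ascCount_add_nonAscents hl hne
  have hcount := (countP_le_card_meets_add_nonAscents hdesc hso hC).1
  have hmeets := card_le_univ (meets d l)
  have hsplit : l.countP (fun z => ∃ j, z ∈ d j) + l.countP (fun z => ¬ ∃ j, z ∈ d j) =
      l.length := by
    rw [List.length_eq_countP_add_countP (fun z => decide (∃ j, z ∈ d j))]
    simp
  omega

end Runs

section Families

variable {k : ℕ} {S T : Fin k → List α}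

lemma FamilyDisjoint.mono (hS : FamilyDisjoint S) (hT : ∀ i, T i ⊆ S i) : FamilyDisjoint T :=
  fun i j hij x hxi hxj => hS i j hij x (hT i hxi) (hT j hxj)

lemma FamilyDisjoint.card_biUnion_toFinset [DecidableEq α] (hS : FamilyDisjoint S)
    (hnd : ∀ i, (S i).Nodup) : #(univ.biUnion fun i => (S i).toFinset) = ∑ i, (S i).length := by
  rw [card_biUnion]
  · exact sum_congr rfl fun i _ => List.toFinset_card_of_nodup (hnd i)
  · intro i _ j _ hij
    exact disjoint_left.mpr fun x hxi hxj =>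
      hS i j hij x (List.mem_toFinset.mp hxi) (List.mem_toFinset.mp hxj)

end Families

theorem sum_length_add_sum_ascCount_le [Fintype α] [Preorder α] {C : α → α → Prop}
    [IsTrans α C] {v p : ℕ} {a : Fin v → List α} {d : Fin p → List α}
    (ha : ∀ i, IsAdjacentable C (a i)) (hadisj : FamilyDisjoint a)
    (hdnd : ∀ j, (d j).Nodup) (hddisj : FamilyDisjoint d)
    (hdesc : ∀ j, ∀ x ∈ d j, ∀ y ∈ d j, C x y → ¬ x < y)
    (hso : ∀ j j', j ≠ j' → ¬ SemiOverlapping C (d j) (d j')) :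
    ∑ j, (d j).length + ∑ i, ascCount (a i) ≤ Fintype.card α + v * p := by
  classical
  set a' : Fin v → List α := fun i => (a i).filter fun z => ¬ ∃ j, z ∈ d j
  set D := univ.biUnion fun j => (d j).toFinset
  set A := univ.biUnion fun i => (a' i).toFinset
  have hasc : ∀ i, ascCount (a i) ≤ (a' i).length + p := fun i => by
    simpa [a', ← List.countP_eq_length_filter] using
      ascCount_le_countP_not_add hdesc hso (ha i).1 (List.isChain_iff_pairwise.mp (ha i).2)
  have hDA : Disjoint D A := disjoint_left.mpr fun x hxD hxA => by
    simp only [D, A, a', mem_biUnion, mem_univ, true_and, List.mem_toFinset, List.mem_filter,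
      decide_eq_true_eq] at hxD hxA
    exact hxA.choose_spec.2 hxD
  calc ∑ j, (d j).length + ∑ i, ascCount (a i)
      ≤ ∑ j, (d j).length + ∑ i, ((a' i).length + p) := by gcongr with i; exact hasc i
    _ = #(D ∪ A) + v * p := by
      rw [card_union_of_disjoint hDA, hddisj.card_biUnion_toFinset hdnd,
        (hadisj.mono fun i => List.filter_subset_self _).card_biUnion_toFinset
          fun i => (ha i).1.filter _, sum_add_distrib, sum_const, card_univ, Fintype.card_fin, smul_eq_mul, add_assoc]
    _ ≤ Fintype.card α + v * p := by gcongr; exact card_le_univ _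

lemma List.Pairwise.rel_of_lt_of_mem {β : Type*} [Preorder β] {f : α → β} {R : α → α → Prop}
    {l : List α} (hf : l.Pairwise fun a b => f a < f b) (hR : l.Pairwise R) {x y : α}
    (hx : x ∈ l) (hy : y ∈ l) (hxy : f x < f y) : R x y := by
  let S a b := (f a < f b → R a b) ∧ (f b < f a → R b a)
  have : Std.Symm S := ⟨fun _ _ h => h.symm⟩
  have hS : l.Pairwise S := (hf.and hR).imp fun h => ⟨fun _ => h.2, fun h' => absurd h' h.1.asymm⟩
  exact (hS.forall hx hy (by rintro rfl; exact lt_irrefl _ hxy)).1 hxy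

section HOrdered

variable {n : ℕ} {h : α ≃ Fin n} {l t : List α}

lemma IsHOrdered.pairwise (hl : IsHOrdered h l) : l.Pairwise fun a b => h a < h b :=
  have : IsTrans α fun a b => h a < h b := ⟨fun _ _ _ => lt_trans⟩
  List.isChain_iff_pairwise.mp hl.2

lemma IsHOrdered.sublist (hl : IsHOrdered h l) (ht : t.Sublist l) : IsHOrdered h t :=
  ⟨hl.1.sublist ht, (hl.pairwise.sublist ht).isChain⟩

lemma IsHOrdered.not_lt_of_lt [Preorder α] (hl : IsHOrdered h l)
    (hdesc : l.Pairwise fun x y => ¬ x < y) {x y : α} (hx : x ∈ l) (hy : y ∈ l)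
    (hxy : h x < h y) : ¬ x < y :=
  hl.pairwise.rel_of_lt_of_mem hdesc hx hy hxy

end HOrdered

lemma SemiOverlapping.mono {C : α → α → Prop} {s t s' t' : List α}
    (hst : SemiOverlapping C s t) (hs : s ⊆ s') (ht : t ⊆ t') : SemiOverlapping C s' t' :=
  let ⟨⟨x, hx, y, hy, hyx⟩, ⟨x', hx', y', hy', hxy'⟩⟩ := hst
  ⟨⟨x, hs hx, y, ht hy, hyx⟩, ⟨x', hs hx', y', ht hy', hxy'⟩⟩

lemma exists_sublist_descCount [Preorder α] (l : List α) :
    ∃ t : List α, t.Sublist l ∧ t.Pairwise (fun a b => ¬ a < b) ∧ t.length = descCount l :=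
  show descCount l ∈ {m | ∃ t : List α, t.Sublist l ∧ t.Pairwise (fun a b => ¬ a < b) ∧
    t.length = m} from Nat.sSup_mem ⟨0, [], List.nil_sublist l, List.Pairwise.nil, rfl⟩
      ⟨l.length, by rintro _ ⟨t, ht, -, rfl⟩; exact ht.length_le⟩

lemma descCount_nil [Preorder α] : descCount ([] : List α) = 0 := by
  obtain ⟨t, ht, -, hlen⟩ := exists_sublist_descCount ([] : List α)
  rw [← hlen, List.sublist_nil.mp ht, List.length_nil]

lemma Nat.sSup_add_sSup_le {s t : Set ℕ} {N : ℕ} (hs : s.Nonempty) (ht : t.Nonempty)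
    (hst : ∀ x ∈ s, ∀ y ∈ t, x + y ≤ N) : sSup s + sSup t ≤ N := by
  obtain ⟨x₀, hx₀⟩ := hs
  obtain ⟨y₀, hy₀⟩ := ht
  have hs' : BddAbove s := ⟨N, fun x hx => (Nat.le_add_right x y₀).trans (hst x hx y₀ hy₀)⟩
  have ht' : BddAbove t := ⟨N, fun y hy => (Nat.le_add_left y x₀).trans (hst x₀ hx₀ y hy)⟩
  exact hst _ (Nat.sSup_mem ⟨x₀, hx₀⟩ hs') _ (Nat.sSup_mem ⟨y₀, hy₀⟩ ht')

theorem sum_length_add_sum_ascCount_le_of_isHOrdered [Preorder α] {n : ℕ} (h : α ≃ Fin n)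
    {C : α → α → Prop} [IsTrans α C] (hC : ∀ x y : α, C x y → h x < h y)
    {v p : ℕ} {a : Fin v → List α} {d : Fin p → List α}
    (ha : ∀ i, IsAdjacentable C (a i)) (hadisj : FamilyDisjoint a)
    (hd : ∀ j, IsHOrdered h (d j)) (hddesc : ∀ j, (d j).Pairwise fun x y => ¬ x < y)
    (hddisj : FamilyDisjoint d) (hdso : ∀ j j', j ≠ j' → ¬ SemiOverlapping C (d j) (d j')) :
    ∑ j, (d j).length + ∑ i, ascCount (a i) ≤ n + v * p := by
  let : Fintype α := .ofEquiv (Fin n) h.symm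
  simpa [Fintype.card_congr h] using sum_length_add_sum_ascCount_le ha hadisj
    (fun j => (hd j).1) hddisj
    (fun j x hx y hy hxy => (hd j).not_lt_of_lt (hddesc j) hx hy (hC x y hxy)) hdso

theorem sum_desc_add_sum_asc_le_general [PartialOrder α] {n : ℕ} (h : α ≃ Fin n)
    (C : α → α → Prop) (hCtrans : Transitive C)
    (hC2 : ∀ x y : α, C x y → h x < h y)
    {v p : ℕ} (a : Fin v → List α) (d : Fin p → List α)
    (ha : ∀ i, IsAdjacentable C (a i)) (hadisj : FamilyDisjoint a)
    (hd : ∀ j, IsHOrdered h (d j))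
    (hddesc : ∀ j, (d j).Pairwise (fun x y => ¬ x < y))
    (hddisj : FamilyDisjoint d)
    (hdso : ∀ j j', j ≠ j' → ¬ SemiOverlapping C (d j) (d j')) :
    (∑ j, (d j).length) + (∑ i, ascCount (a i)) ≤ n + v * p ∧
      Dval h C p + Aval C v ≤ n + v * p := by
  have : IsTrans α C := ⟨fun _ _ _ => @hCtrans _ _ _⟩
  refine ⟨sum_length_add_sum_ascCount_le_of_isHOrdered h hC2 ha hadisj hd hddesc hddisj hdso,
    Nat.sSup_add_sSup_le ⟨0, fun _ => [], ?_⟩ ⟨0, fun _ => [], ?_⟩ ?_⟩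
  · exact ⟨fun _ => ⟨.nil, .nil⟩, fun _ _ _ _ hx => absurd hx List.not_mem_nil,
      fun _ _ _ hso => by simp [SemiOverlapping] at hso, by simp [descCount_nil]⟩
  · exact ⟨fun _ => ⟨.nil, .nil⟩, fun _ _ _ _ hx => absurd hx List.not_mem_nil,
      by simp [ascCount]⟩
  rintro _ ⟨S, hS, hSdisj, hSso, rfl⟩ _ ⟨A, hA, hAdisj, rfl⟩
  choose t hts htdesc htlen using fun j => exists_sublist_descCount (S j)
  simp only [← htlen]
  exact sum_length_add_sum_ascCount_le_of_isHOrdered h hC2 hA hAdisj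
    (fun j => (hS j).sublist (hts j)) htdesc (hSdisj.mono fun j => (hts j).subset)
    fun j j' hjj' hso => hSso j j' hjj' (hso.mono (hts j).subset (hts j').subset)

/-- The key inequality of Section 6: for `v` disjoint adjacentable sequences `a` and `p`
disjoint, pairwise non-semi-overlapping, `h`-ordered descending sequences `d`,
`∑ |d_j| + ∑ asc(a_i) ≤ n + v·p`; in particular `D'_p + A'_v ≤ n + v·p`. -/
theorem sum_desc_add_sum_asc_le [PartialOrder α] {n : ℕ} (h : α ≃ Fin n)
    (C : α → α → Prop) (hCtrans : Transitive C)
    (hC1 : ∀ x y : α, x < y → h x < h y → C x y)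
    (hC2 : ∀ x y : α, C x y → h x < h y)
    {v p : ℕ} (a : Fin v → List α) (d : Fin p → List α)
    (ha : ∀ i, IsAdjacentable C (a i)) (hadisj : FamilyDisjoint a)
    (hd : ∀ j, IsHOrdered h (d j))
    (hddesc : ∀ j, (d j).Pairwise (fun x y => ¬ x < y))
    (hddisj : FamilyDisjoint d)
    (hdso : ∀ j j', j ≠ j' → ¬ SemiOverlapping C (d j) (d j')) :
    (∑ j, (d j).length) + (∑ i, ascCount (a i)) ≤ n + v * p ∧
      Dval h C p + Aval C v ≤ n + v * p :=
  sum_desc_add_sum_asc_le_general h C hCtrans hC2 a d ha hadisj hd hddesc hddisj hdso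
end

section
/- Fix an adjacentable sequence a and pairwise disjoint, pairwise non-semi-overlapping h-ordered sequences d_1,...,d_p. If x ∈ a ∩ d_m and y ∈ a ∩ d_j with m ≠ j and h(x) < h(y), then (x,y) ∈ C_P; consequently, for each pair j ≠ m, either all elements of a ∩ d_m precede all elements of a ∩ d_j in a, or vice versa. -/
variable {α : Type*}

theorem List.Pairwise.rel_of_idxOf_lt [DecidableEq α] {R : α → α → Prop} {l : List α}
    (hl : l.Pairwise R) {x y : α} (hx : x ∈ l) (hy : y ∈ l) (hxy : l.idxOf x < l.idxOf y) :
    R x y := by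
  simpa using hl.rel_get_of_lt
    (a := ⟨_, List.idxOf_lt_length_iff.2 hx⟩) (b := ⟨_, List.idxOf_lt_length_iff.2 hy⟩) hxy

theorem List.idxOf_lt_of_le_of_ne [DecidableEq α] {l : List α} {x y : α} (hx : x ∈ l)
    (hle : l.idxOf x ≤ l.idxOf y) (hne : x ≠ y) : l.idxOf x < l.idxOf y :=
  hle.lt_of_ne fun heq => hne ((List.idxOf_inj hx).1 heq)

section Adjacentable

variable {C : α → α → Prop} [IsTrans α C] {a : List α}

theorem IsAdjacentable.pairwise (ha : IsAdjacentable C a) : a.Pairwise C :=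
  List.isChain_iff_pairwise.1 ha.2

variable [DecidableEq α]

theorem IsAdjacentable.rel_of_idxOf_le (ha : IsAdjacentable C a)
    {x y : α} (hx : x ∈ a) (hy : y ∈ a) (hne : x ≠ y) (hle : a.idxOf x ≤ a.idxOf y) : C x y :=
  ha.pairwise.rel_of_idxOf_lt hx hy (List.idxOf_lt_of_le_of_ne hx hle hne)

theorem IsAdjacentable.rel_of_apply_lt {β : Type*} [Preorder β] (f : α → β)
    (hCf : ∀ x y, C x y → f x < f y) (ha : IsAdjacentable C a) {x y : α} (hx : x ∈ a)
    (hy : y ∈ a) (hxy : f x < f y) : C x y := by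
  have hne : x ≠ y := by rintro rfl; exact hxy.false
  rcases le_total (a.idxOf x) (a.idxOf y) with hle | hle
  · exact ha.rel_of_idxOf_le hx hy hne hle
  · exact absurd (hCf y x (ha.rel_of_idxOf_le hy hx hne.symm hle)) hxy.asymm

-- Interleaving sequences inside `a` would be semi-overlapping, since `a` is a `C`-chain.
theorem IsAdjacentable.idxOf_lt_or_idxOf_lt (ha : IsAdjacentable C a)
    {s t : List α} (hdisj : ∀ x ∈ s, x ∉ t) (hst : ¬ SemiOverlapping C s t) :
    (∀ x ∈ a, x ∈ s → ∀ y ∈ a, y ∈ t → a.idxOf x < a.idxOf y) ∨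
      (∀ x ∈ a, x ∈ s → ∀ y ∈ a, y ∈ t → a.idxOf y < a.idxOf x) := by
  by_contra! hcon
  obtain ⟨⟨x, hxa, hxs, y, hya, hyt, hyx⟩, ⟨x', hx'a, hx's, y', hy'a, hy't, hx'y'⟩⟩ := hcon
  have hne : ∀ {u v}, u ∈ s → v ∈ t → u ≠ v := fun hu hv huv => hdisj _ hu (huv ▸ hv)
  exact hst ⟨⟨x, hxs, y, hyt, ha.rel_of_idxOf_le hya hxa (hne hxs hyt).symm hyx⟩,
    ⟨x', hx's, y', hy't, ha.rel_of_idxOf_le hx'a hy'a (hne hx's hy't) hx'y'⟩⟩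

end Adjacentable

theorem intersection_blocks_general [DecidableEq α] {n : ℕ} (h : α ≃ Fin n)
    (C : α → α → Prop) (hCtrans : Transitive C)
    (hC2 : ∀ x y : α, C x y → h x < h y)
    {p : ℕ} (a : List α) (d : Fin p → List α)
    (ha : IsAdjacentable C a)
    (hddisj : FamilyDisjoint d)
    (hdso : ∀ j j', j ≠ j' → ¬ SemiOverlapping C (d j) (d j')) :
    (∀ (m j : Fin p) (x y : α), m ≠ j → x ∈ a → x ∈ d m → y ∈ a → y ∈ d j →
        h x < h y → C x y) ∧
      (∀ m j : Fin p, m ≠ j →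
        (∀ x ∈ a, x ∈ d m → ∀ y ∈ a, y ∈ d j → a.idxOf x < a.idxOf y) ∨
        (∀ x ∈ a, x ∈ d m → ∀ y ∈ a, y ∈ d j → a.idxOf y < a.idxOf x)) :=
  have : IsTrans α C := ⟨fun _ _ _ => @hCtrans _ _ _⟩
  ⟨fun _ _ _ _ _ hxa _ hya _ hxy => ha.rel_of_apply_lt h hC2 hxa hya hxy,
    fun m j hmj => ha.idxOf_lt_or_idxOf_lt (hddisj m j hmj) (hdso m j hmj)⟩

/-- If `x ∈ a ∩ d_m`, `y ∈ a ∩ d_j` with `m ≠ j` and `h x < h y`, then `(x,y) ∈ C_P`;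
consequently the elements of `a ∩ d_m` and `a ∩ d_j` do not interleave inside `a`. -/
theorem intersection_blocks [PartialOrder α] [DecidableEq α] {n : ℕ} (h : α ≃ Fin n)
    (C : α → α → Prop) (hCtrans : Transitive C)
    (hC1 : ∀ x y : α, x < y → h x < h y → C x y)
    (hC2 : ∀ x y : α, C x y → h x < h y)
    {p : ℕ} (a : List α) (d : Fin p → List α)
    (ha : IsAdjacentable C a)
    (hd : ∀ j, IsHOrdered h (d j))
    (hddisj : FamilyDisjoint d)
    (hdso : ∀ j j', j ≠ j' → ¬ SemiOverlapping C (d j) (d j')) :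
    (∀ (m j : Fin p) (x y : α), m ≠ j → x ∈ a → x ∈ d m → y ∈ a → y ∈ d j →
        h x < h y → C x y) ∧
      (∀ m j : Fin p, m ≠ j →
        (∀ x ∈ a, x ∈ d m → ∀ y ∈ a, y ∈ d j → a.idxOf x < a.idxOf y) ∨
        (∀ x ∈ a, x ∈ d m → ∀ y ∈ a, y ∈ d j → a.idxOf y < a.idxOf x)) :=
  intersection_blocks_general h C hCtrans hC2 a d ha hddisj hdso
end

section
/- Antichain exchange lemma: let P be a finite poset and d_i, d_j two disjoint antichains. Let A = {x ∈ d_i : ∃ y ∈ d_j, y <_P x} and B = {y ∈ d_j : ∃ x ∈ d_i, y <_P x}. Then d_i' = (d_i \ A) ∪ B and d_j' = (d_j \ B) ∪ A are again disjoint antichains with |d_i'| + |d_j'| = |d_i| + |d_j|. -/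
/-! Replacing `A` by `B` in `di` keeps it an antichain: an element
`b ∈ B` lies below some `x ∈ di`, so an element of `di` below `b` would lie below `x`, and an
element of `di` above `b` belongs to `A` and was removed. The second antichain is the first one in the
dual order with the roles of `di` and `dj` swapped. -/

namespace IsAntichain

variable {α : Type*} [PartialOrder α] {s t : Set α}

theorem diff_above_union_below (hs : IsAntichain (· ≤ ·) s) (ht : IsAntichain (· ≤ ·) t) :
    IsAntichain (· ≤ ·) ((s \ {x ∈ s | ∃ y ∈ t, y < x}) ∪ {y ∈ t | ∃ x ∈ s, y < x}) := by
  rintro a (⟨has, -⟩ | ⟨hat, -⟩) b (⟨hbs, hb_notAbove⟩ | ⟨hbt, x, hxs, hbx⟩) hab hle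
  · exact hs has hbs hab hle
  · exact hs has hxs (hle.trans_lt hbx).ne (hle.trans hbx.le)
  · exact hb_notAbove ⟨hbs, a, hat, lt_of_le_of_ne hle hab⟩
  · exact ht hat hbt hab hle

theorem diff_below_union_above (hs : IsAntichain (· ≤ ·) s) (ht : IsAntichain (· ≤ ·) t) :
    IsAntichain (· ≤ ·) ((t \ {y ∈ t | ∃ x ∈ s, y < x}) ∪ {x ∈ s | ∃ y ∈ t, y < x}) :=
  to_dual_iff.mpr (diff_above_union_below (α := αᵒᵈ) ht.to_dual hs.to_dual)

end IsAntichain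

namespace Set

variable {α : Type*} {s t a b : Set α}

theorem disjoint_diff_union_diff_union (h : Disjoint s t) (ha : a ⊆ s) (hb : b ⊆ t) :
    Disjoint (s \ a ∪ b) (t \ b ∪ a) := by
  simp only [disjoint_union_left, disjoint_union_right]
  exact ⟨⟨h.mono sdiff_subset sdiff_subset, disjoint_sdiff_right⟩,
    disjoint_sdiff_left, h.symm.mono hb ha⟩

theorem ncard_diff_union_add_ncard_diff_union (h : Disjoint s t) (hs : s.Finite) (ht : t.Finite)
    (ha : a ⊆ s) (hb : b ⊆ t) :
    (s \ a ∪ b).ncard + (t \ b ∪ a).ncard = s.ncard + t.ncard := by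
  rw [ncard_union_eq (h.symm.mono hb sdiff_subset).symm hs.sdiff (ht.subset hb),
    ncard_union_eq (h.mono ha sdiff_subset).symm ht.sdiff (hs.subset ha),
    ← ncard_sdiff_add_ncard_of_subset ha hs, ← ncard_sdiff_add_ncard_of_subset hb ht]
  ring

end Set

/-- **Antichain exchange lemma.** Moving the sets `A` and `B` of "high" and "low"
elements between two disjoint antichains produces two disjoint antichains with the
same total size. -/
theorem antichain_exchange {α : Type*} [PartialOrder α]
    (di dj : Set α) (hfi : di.Finite) (hfj : dj.Finite)
    (hdisj : Disjoint di dj)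
    (hai : IsAntichain (· ≤ ·) di) (haj : IsAntichain (· ≤ ·) dj) :
    IsAntichain (· ≤ ·)
        ((di \ {x ∈ di | ∃ y ∈ dj, y < x}) ∪ {y ∈ dj | ∃ x ∈ di, y < x}) ∧
      IsAntichain (· ≤ ·)
        ((dj \ {y ∈ dj | ∃ x ∈ di, y < x}) ∪ {x ∈ di | ∃ y ∈ dj, y < x}) ∧
      Disjoint ((di \ {x ∈ di | ∃ y ∈ dj, y < x}) ∪ {y ∈ dj | ∃ x ∈ di, y < x})
        ((dj \ {y ∈ dj | ∃ x ∈ di, y < x}) ∪ {x ∈ di | ∃ y ∈ dj, y < x}) ∧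
      ((di \ {x ∈ di | ∃ y ∈ dj, y < x}) ∪ {y ∈ dj | ∃ x ∈ di, y < x}).ncard +
          ((dj \ {y ∈ dj | ∃ x ∈ di, y < x}) ∪ {x ∈ di | ∃ y ∈ dj, y < x}).ncard =
        di.ncard + dj.ncard := by
  have hA : {x ∈ di | ∃ y ∈ dj, y < x} ⊆ di := Set.sep_subset _ _
  have hB : {y ∈ dj | ∃ x ∈ di, y < x} ⊆ dj := Set.sep_subset _ _
  exact ⟨hai.diff_above_union_below haj, hai.diff_below_union_above haj,
    Set.disjoint_diff_union_diff_union hdisj hA hB,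
    Set.ncard_diff_union_add_ncard_diff_union hdisj hfi hfj hA hB⟩
end

section
/- Let P be a finite poset, h a linear extension, and C_P = {(x,y) : x <_P y}. For every p, any family of p disjoint antichains of maximal total size can be rearranged into p disjoint antichains of the same total size that are pairwise non-semi-overlapping (i.e., for no pair d_i, d_j with i < j do there exist x ∈ d_i, y ∈ d_j with y <_P x). Consequently D'_p = D_p, where D_p is the maximal total size of p disjoint antichains. -/
/-! The elements of `⋃ i, d i`, viewed as a subposet, all have height `< p`: a chain meets each
antichain `d i` at most once. The height layers are therefore `p` disjoint antichains of the same
total size, and since height is strictly monotone no element of a later layer lies below one of an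
earlier layer. Listing each layer in `h`-order gives non-semi-overlapping `h`-ordered sequences
whose `desc` is the layer size. Conversely, since `h` is a linear extension, a longest subsequence
without ascents of an `h`-ordered sequence is an antichain, so `D'_p ≤ D_p`. -/

variable {α : Type*}

theorem Order.height_lt_of_lt_imp_ne {β : Type*} [Preorder β] {p : ℕ} (f : β → Fin p)
    (hf : ∀ ⦃x y⦄, x < y → f x ≠ f y) (x : β) : Order.height x < p := by
  by_contra! hle
  obtain ⟨s, -, hlen⟩ := Order.exists_series_of_le_height x hle
  have hinj : Function.Injective (f ∘ s) :=
    Function.Injective.of_lt_imp_ne fun i j hij => hf (s.strictMono hij)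
  simpa [hlen] using Fintype.card_le_of_injective _ hinj

theorem exists_strictMonoOn_lt_of_subset_iUnion [Preorder α] {p : ℕ} {s : Set α} (d : Fin p → Set α)
    (hanti : ∀ i, IsAntichain (· ≤ ·) (d i)) (hcover : s ⊆ ⋃ i, d i) :
    ∃ g : α → ℕ, StrictMonoOn g s ∧ ∀ x ∈ s, g x < p := by
  choose f hf using fun x : s => Set.mem_iUnion.mp (hcover x.2)
  have hheight (x : s) : Order.height x < p :=
    Order.height_lt_of_lt_imp_ne f (fun x y hxy hfxy =>
      hanti (f y) (hfxy ▸ hf x) (hf y) (Subtype.coe_injective.ne hxy.ne) hxy.le) x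
  choose g hg using fun x : s => ENat.ne_top_iff_exists.mp (hheight x).ne_top
  have hval (x : α) (hx : x ∈ s) : Function.extend Subtype.val g 0 x = g ⟨x, hx⟩ :=
    Subtype.val_injective.extend_apply g 0 ⟨x, hx⟩
  refine ⟨Function.extend Subtype.val g 0, fun x hx y hy hxy => ?_, fun x hx => ?_⟩
  · have := Order.height_add_one_le (show (⟨x, hx⟩ : s) < ⟨y, hy⟩ from hxy)
    rw [← hg, ← hg] at this
    rw [hval x hx, hval y hy]
    exact_mod_cast this
  · have := hheight ⟨x, hx⟩
    rw [← hg] at this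
    rw [hval x hx]
    exact_mod_cast this

section Rearrange

variable [PartialOrder α] {p : ℕ}

theorem exists_antichains_not_lt_of_strictMonoOn (U : Finset α) {g : α → ℕ}
    (hg : StrictMonoOn g U) (hlt : ∀ x ∈ U, g x < p) :
    ∃ e : Fin p → Finset α, (∀ i, IsAntichain (· ≤ ·) (e i : Set α)) ∧
      (∀ i j, i ≠ j → Disjoint (e i) (e j)) ∧ (∑ i, (e i).card = U.card) ∧
      ∀ i j : Fin p, i < j → ∀ x ∈ e i, ∀ y ∈ e j, ¬ y < x := by
  refine ⟨fun i => U.filter (g · = i), fun i => ?_, fun i j hij => ?_, ?_, ?_⟩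
  · refine isAntichain_iff_forall_not_lt.mpr fun x hx y hy hxy => ?_
    simp only [Finset.coe_filter, Set.mem_ofPred_eq] at hx hy
    exact (hg hx.1 hy.1 hxy).ne (hx.2.trans hy.2.symm)
  · refine Finset.disjoint_filter.mpr fun x _ hi hj => hij (Fin.ext ?_)
    rw [← hi, ← hj]
  · rw [Fin.sum_univ_eq_sum_range (fun i => (U.filter (g · = i)).card),
      ← Finset.card_eq_sum_card_fiberwise fun x hx => Finset.mem_range.mpr (hlt x hx)]
  · intro i j hij x hx y hy hyx
    simp only [Finset.mem_filter] at hx hy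
    have := hg hy.1 hx.1 hyx
    rw [hx.2, hy.2] at this
    exact hij.not_gt this

theorem exists_antichains_not_lt (d : Fin p → Finset α)
    (hanti : ∀ i, IsAntichain (· ≤ ·) (d i : Set α))
    (hdisj : ∀ i j, i ≠ j → Disjoint (d i) (d j)) :
    ∃ e : Fin p → Finset α, (∀ i, IsAntichain (· ≤ ·) (e i : Set α)) ∧
      (∀ i j, i ≠ j → Disjoint (e i) (e j)) ∧
      (∑ i, (e i).card = ∑ i, (d i).card) ∧
      ∀ i j : Fin p, i < j → ∀ x ∈ e i, ∀ y ∈ e j, ¬ y < x := by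
  classical
  obtain ⟨g, hg, hlt⟩ := exists_strictMonoOn_lt_of_subset_iUnion (s := ↑(Finset.univ.biUnion d))
    (fun i => (d i : Set α)) hanti (by simp)
  rw [← Finset.card_biUnion fun i _ j _ hij => hdisj i j hij]
  exact exists_antichains_not_lt_of_strictMonoOn _ hg hlt

end Rearrange

section DescCount

variable [Preorder α]

theorem exists_sublist_length_eq_descCount (l : List α) :
    ∃ t : List α, t.Sublist l ∧ t.Pairwise (fun a b => ¬ a < b) ∧ t.length = descCount l :=
  Nat.sSup_mem (s := {m | ∃ t : List α, t.Sublist l ∧ t.Pairwise (fun a b => ¬ a < b) ∧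
      t.length = m}) ⟨0, [], List.nil_sublist l, List.Pairwise.nil, rfl⟩
    ⟨l.length, by rintro _ ⟨t, hs, -, rfl⟩; exact hs.length_le⟩

theorem length_le_descCount {l : List α} (hl : l.Pairwise (fun a b => ¬ a < b)) :
    l.length ≤ descCount l :=
  le_csSup ⟨l.length, by rintro _ ⟨t, hs, -, rfl⟩; exact hs.length_le⟩
    ⟨l, List.Sublist.refl l, hl, rfl⟩

theorem card_le_descCount_of_isAntichain {s : Finset α}
    (hs : IsAntichain (· ≤ ·) (s : Set α)) {l : List α} (hl : l.Nodup)
    (hmem : ∀ a, a ∈ l ↔ a ∈ s) : s.card ≤ descCount l := by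
  classical
  have hlen : s.card = l.length := by
    rw [← List.toFinset_card_of_nodup hl]
    congr 1
    ext a
    simp [hmem]
  rw [hlen]
  refine length_le_descCount (hl.pairwise_of_forall_ne fun a ha b hb _ => ?_)
  exact hs.not_lt ((hmem a).mp ha) ((hmem b).mp hb)

end DescCount

section HOrdered

variable {n : ℕ} (h : α ≃ Fin n)

theorem exists_isHOrdered_mem_iff (s : Finset α) :
    ∃ l : List α, IsHOrdered h l ∧ ∀ a, a ∈ l ↔ a ∈ s := by
  classical
  have hsorted : ((List.finRange n).map h.symm).Pairwise (fun a b => h a < h b) := by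
    simpa [List.pairwise_map] using (List.sortedLT_finRange n).pairwise
  refine ⟨((List.finRange n).map h.symm).filter (· ∈ s), ⟨?_, ?_⟩,
    fun a => by simp [Equiv.symm_apply_eq]⟩
  · exact (hsorted.filter _).imp fun hab => ne_of_apply_ne h hab.ne
  · exact (hsorted.filter _).isChain

theorem exists_isAntichain_card_eq_descCount [PartialOrder α]
    (hlin : ∀ x y : α, x < y → h x < h y) {l : List α} (hl : IsHOrdered h l) :
    ∃ s : Finset α, IsAntichain (· ≤ ·) (s : Set α) ∧ (∀ a ∈ s, a ∈ l) ∧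
      s.card = descCount l := by
  classical
  obtain ⟨t, hsub, hdesc, hlen⟩ := exists_sublist_length_eq_descCount l
  have hord : t.Pairwise (fun a b => h a < h b) :=
    (List.isChain_iff_pairwise.mp hl.2).sublist hsub
  have hincomp : t.Pairwise (IncompRel (· < ·)) :=
    (hdesc.and hord).imp fun hab => ⟨hab.1, fun hba => (hlin _ _ hba).not_gt hab.2⟩
  refine ⟨t.toFinset, isAntichain_iff_forall_not_lt.mpr fun a ha b hb => ?_,
    fun a ha => hsub.subset (List.mem_toFinset.mp ha), ?_⟩
  · rw [Finset.mem_coe, List.mem_toFinset] at ha hb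
    exact (hincomp.forall_of_forall (fun a _ => refl a) ha hb).1
  · rw [List.toFinset_card_of_nodup (hsub.nodup hl.1), hlen]

end HOrdered

section Families

variable [PartialOrder α] {n p : ℕ} (h : α ≃ Fin n)

theorem exists_antichains_sum_card_eq_sum_descCount (hlin : ∀ x y : α, x < y → h x < h y)
    {S : Fin p → List α} (hS : ∀ i, IsHOrdered h (S i)) (hdisj : FamilyDisjoint S) :
    ∃ d : Fin p → Finset α, (∀ i, IsAntichain (· ≤ ·) (d i : Set α)) ∧
      (∀ i j, i ≠ j → Disjoint (d i) (d j)) ∧ ∑ i, descCount (S i) = ∑ i, (d i).card := by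
  choose d hanti hsub hcard using fun i => exists_isAntichain_card_eq_descCount h hlin (hS i)
  refine ⟨d, hanti, fun i j hij => Finset.disjoint_left.mpr fun x hi hj => ?_, by simp [hcard]⟩
  exact hdisj i j hij x (hsub i x hi) (hsub j x hj)

theorem exists_isHOrdered_not_semiOverlapping {e : Fin p → Finset α}
    (hanti : ∀ i, IsAntichain (· ≤ ·) (e i : Set α)) (hdisj : ∀ i j, i ≠ j → Disjoint (e i) (e j))
    (hnotlt : ∀ i j : Fin p, i < j → ∀ x ∈ e i, ∀ y ∈ e j, ¬ y < x) :
    ∃ S : Fin p → List α, (∀ i, IsHOrdered h (S i)) ∧ FamilyDisjoint S ∧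
      (∀ i j, i ≠ j → ¬ SemiOverlapping (· < ·) (S i) (S j)) ∧
      ∑ i, (e i).card ≤ ∑ i, descCount (S i) := by
  choose S hS hmem using fun i => exists_isHOrdered_mem_iff h (e i)
  refine ⟨S, hS, fun i j hij x hi hj => ?_, ?_, Finset.sum_le_sum fun i _ =>
    card_le_descCount_of_isAntichain (hanti i) (hS i).1 (hmem i)⟩
  · exact Finset.disjoint_left.mp (hdisj i j hij) ((hmem i x).mp hi) ((hmem j x).mp hj)
  · rintro i j hij ⟨⟨x, hx, y, hy, hyx⟩, ⟨x', hx', y', hy', hxy⟩⟩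
    rcases hij.lt_or_gt with hlt | hlt
    · exact hnotlt i j hlt x ((hmem i x).mp hx) y ((hmem j y).mp hy) hyx
    · exact hnotlt j i hlt y' ((hmem j y').mp hy') x' ((hmem i x').mp hx') hxy

end Families

theorem antichains_rearrange_general [PartialOrder α] {n p : ℕ}
    (h : α ≃ Fin n) (hlin : ∀ x y : α, x < y → h x < h y)
    (d : Fin p → Finset α)
    (hanti : ∀ i, IsAntichain (· ≤ ·) (d i : Set α))
    (hdisj : ∀ i j, i ≠ j → Disjoint (d i) (d j)) :
    (∃ e : Fin p → Finset α, (∀ i, IsAntichain (· ≤ ·) (e i : Set α)) ∧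
      (∀ i j, i ≠ j → Disjoint (e i) (e j)) ∧
      (∑ i, (e i).card = ∑ i, (d i).card) ∧
      ∀ i j : Fin p, i < j → ∀ x ∈ e i, ∀ y ∈ e j, ¬ y < x) ∧
    Dval h (fun x y : α => x < y) p =
      sSup {m | ∃ d' : Fin p → Finset α, (∀ i, IsAntichain (· ≤ ·) (d' i : Set α)) ∧
        (∀ i j, i ≠ j → Disjoint (d' i) (d' j)) ∧ m = ∑ i, (d' i).card} := by
  refine ⟨exists_antichains_not_lt d hanti hdisj, csSup_eq_csSup_of_forall_exists_le ?_ ?_⟩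
  · rintro _ ⟨S, hS, hdisjS, -, rfl⟩
    obtain ⟨d', hanti', hdisj', hsum⟩ :=
      exists_antichains_sum_card_eq_sum_descCount h hlin hS hdisjS
    exact ⟨_, ⟨d', hanti', hdisj', rfl⟩, hsum.le⟩
  · rintro _ ⟨d', hanti', hdisj', rfl⟩
    obtain ⟨e, heanti, hedisj, hesum, hnotlt⟩ := exists_antichains_not_lt d' hanti' hdisj'
    obtain ⟨S, hS, hdisjS, hnso, hle⟩ :=
      exists_isHOrdered_not_semiOverlapping h heanti hedisj hnotlt
    exact ⟨_, ⟨S, hS, hdisjS, hnso, rfl⟩, hesum ▸ hle⟩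

/-- Any family of `p` disjoint antichains of maximal total size can be rearranged into a
non-semi-overlapping family of the same total size; consequently `D'_p` equals `D_p`,
the maximal total size of `p` disjoint antichains. -/
theorem antichains_rearrange [PartialOrder α] {n p : ℕ}
    (h : α ≃ Fin n) (hlin : ∀ x y : α, x < y → h x < h y)
    (d : Fin p → Finset α)
    (hanti : ∀ i, IsAntichain (· ≤ ·) (d i : Set α))
    (hdisj : ∀ i j, i ≠ j → Disjoint (d i) (d j))
    (hmax : ∀ d' : Fin p → Finset α, (∀ i, IsAntichain (· ≤ ·) (d' i : Set α)) →
      (∀ i j, i ≠ j → Disjoint (d' i) (d' j)) →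
      ∑ i, (d' i).card ≤ ∑ i, (d i).card) :
    (∃ e : Fin p → Finset α, (∀ i, IsAntichain (· ≤ ·) (e i : Set α)) ∧
      (∀ i j, i ≠ j → Disjoint (e i) (e j)) ∧
      (∑ i, (e i).card = ∑ i, (d i).card) ∧
      ∀ i j : Fin p, i < j → ∀ x ∈ e i, ∀ y ∈ e j, ¬ y < x) ∧
    Dval h (fun x y : α => x < y) p =
      sSup {m | ∃ d' : Fin p → Finset α, (∀ i, IsAntichain (· ≤ ·) (d' i : Set α)) ∧
        (∀ i j, i ≠ j → Disjoint (d' i) (d' j)) ∧ m = ∑ i, (d' i).card} :=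
  antichains_rearrange_general h hlin d hanti hdisj
end

section
/- Given partitions λ and μ of n, suppose there exist nonnegative integers A'_0 = 0 ≤ A'_1 ≤ ... and D'_0 = 0 ≤ D'_1 ≤ ... with λ_k = A'_k − A'_{k−1}, μ_k = D'_k − D'_{k−1}, such that A'_v + D'_p ≤ n + vp for all v, p ≥ 0, and for each v there exists p with A'_v + D'_p = n + vp and for each p there exists v with equality. Then λ and μ are conjugate partitions. -/
/-- If partitions `λ, μ` of `n` arise as successive differences of monotone sequences
`A', D'` with `A'_v + D'_p ≤ n + v·p` always, and with equality attained for each `v`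
at some `p` and for each `p` at some `v`, then `λ` and `μ` are conjugate. -/
theorem conjugate_of_complementary (n : ℕ) (A D : ℕ → ℕ) (f g : ℕ → ℕ)
    (hA0 : A 0 = 0) (hD0 : D 0 = 0) (hAmono : Monotone A) (hDmono : Monotone D)
    (hf : ∀ k, f k = A (k + 1) - A k) (hg : ∀ k, g k = D (k + 1) - D k)
    (hfp : IsPartitionOf n f) (hgp : IsPartitionOf n g)
    (hle : ∀ v p, A v + D p ≤ n + v * p)
    (hex1 : ∀ v, ∃ p, A v + D p = n + v * p)
    (hex2 : ∀ p, ∃ v, A v + D p = n + v * p) :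
    ∀ j, g j = Nat.card {i : ℕ | j + 1 ≤ f i} := by
  obtain ⟨hfdec, N, hsum, hfN⟩ := hfp
  -- f is antitone
  have hfanti : ∀ ⦃i j : ℕ⦄, i ≤ j → f j ≤ f i := by
    intro i j hij
    induction j with
    | zero =>
      have : i = 0 := Nat.le_zero.mp hij
      subst this; exact le_rfl
    | succ j ih =>
      rcases Nat.lt_or_ge i (j + 1) with h | h
      · exact le_trans (hfdec j) (ih (Nat.lt_succ_iff.mp h))
      · have : i = j + 1 := le_antisymm hij h
        subst this; exact le_rfl
  -- A is the partial-sum function of f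
  have hAsum : ∀ v, A v = ∑ k ∈ Finset.range v, f k := by
    intro v
    induction v with
    | zero => simpa using hA0
    | succ v ih =>
      have h := hf v
      have hmv := hAmono (Nat.le_succ v)
      rw [Finset.sum_range_succ, ← ih]
      simp only [Nat.succ_eq_add_one] at hmv ⊢
      omega
  -- rewriting lemmas over a large range M
  have hCM : ∀ (p M : ℕ), N ≤ M →
      (∑ i ∈ Finset.range N, min (f i) p) = ∑ i ∈ Finset.range M, min (f i) p := by
    intro p M hM
    apply Finset.sum_subset (Finset.range_subset_range.2 hM)
    intro i _ hi
    simp only [Finset.mem_range, not_lt] at hi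
    simp [hfN i hi]
  have hnM : ∀ (M : ℕ), N ≤ M → n = ∑ i ∈ Finset.range M, f i := by
    intro M hM
    rw [← hsum]
    exact Finset.sum_subset (Finset.range_subset_range.2 hM)
      (fun i _ hi => hfN i (by simpa using hi))
  have hAM : ∀ (v M : ℕ), v ≤ M →
      A v = ∑ i ∈ Finset.range M, (if i < v then f i else 0) := by
    intro v M hvM
    rw [hAsum v, ← Finset.sum_subset (Finset.range_subset_range.2 hvM)
      (fun i _ hi => by
        simp only [Finset.mem_range, not_lt] at hi
        simp [Nat.not_lt.2 hi])]
    exact (Finset.sum_congr rfl fun i hi => by simp [Finset.mem_range.mp hi]).symm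
  have hvpM : ∀ (v p M : ℕ), v ≤ M →
      v * p = ∑ i ∈ Finset.range M, (if i < v then p else 0) := by
    intro v p M hvM
    rw [← Finset.sum_subset (Finset.range_subset_range.2 hvM)
      (fun i _ hi => by
        simp only [Finset.mem_range, not_lt] at hi
        simp [Nat.not_lt.2 hi])]
    rw [Finset.sum_congr rfl (fun i hi => if_pos (Finset.mem_range.mp hi))]
    simp [Finset.sum_const, Nat.mul_comm]
  -- the "conjugate partial sums" C also satisfy the inequality
  have hCle : ∀ v p, A v + (∑ i ∈ Finset.range N, min (f i) p) ≤ n + v * p := by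
    intro v p
    have h1 : v ≤ max v N := le_max_left _ _
    have h2 : N ≤ max v N := le_max_right _ _
    rw [hAM v (max v N) h1, hCM p (max v N) h2, hnM (max v N) h2, hvpM v p (max v N) h1,
      ← Finset.sum_add_distrib, ← Finset.sum_add_distrib]
    apply Finset.sum_le_sum
    intro i _
    have h3 := Nat.min_le_left (f i) p
    have h4 := Nat.min_le_right (f i) p
    split <;> omega
  -- and equality is attained for each p
  have hCeq : ∀ p, ∃ v, A v + (∑ i ∈ Finset.range N, min (f i) p) = n + v * p := by
    intro p
    set v := ((Finset.range N).filter fun i => p + 1 ≤ f i).card with hv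
    have hvN : v ≤ N := le_trans (Finset.card_filter_le _ _) (by simp)
    have hv2 : ∀ i, v ≤ i → f i ≤ p := by
      intro i hvi
      have hfv : f v ≤ p := by
        by_contra h
        push_neg at h
        have hvN' : v < N := by
          by_contra hN
          have := hfN v (le_of_not_gt hN); omega
        have hsub : Finset.range (v + 1) ⊆ (Finset.range N).filter fun i => p + 1 ≤ f i := by
          intro i hi
          simp only [Finset.mem_range] at hi
          have hiv : i ≤ v := Nat.lt_succ_iff.mp hi
          refine Finset.mem_filter.2 ⟨Finset.mem_range.2 (lt_of_le_of_lt hiv hvN'), ?_⟩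
          have := hfanti hiv
          omega
        have hcard := Finset.card_le_card hsub
        rw [Finset.card_range, ← hv] at hcard
        omega
      exact le_trans (hfanti hvi) hfv
    have hv1 : ∀ i, i < v → p + 1 ≤ f i := by
      intro i hiv
      by_contra h
      push_neg at h
      have hsub : ((Finset.range N).filter fun j => p + 1 ≤ f j) ⊆ Finset.range i := by
        intro j hj
        simp only [Finset.mem_filter, Finset.mem_range] at hj
        simp only [Finset.mem_range]
        by_contra hji
        push_neg at hji
        have := hfanti hji
        omega
      have hcard := Finset.card_le_card hsub
      rw [Finset.card_range, ← hv] at hcard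
      omega
    refine ⟨v, ?_⟩
    rw [hAM v N hvN, hCM p N le_rfl, hnM N le_rfl, hvpM v p N hvN,
      ← Finset.sum_add_distrib, ← Finset.sum_add_distrib]
    apply Finset.sum_congr rfl
    intro i _
    by_cases hi : i < v
    · have := hv1 i hi
      rw [if_pos hi, if_pos hi, min_eq_right (by omega : p ≤ f i)]
    · have := hv2 i (le_of_not_gt hi)
      rw [if_neg hi, if_neg hi, min_eq_left this]
      omega
  -- hence D agrees with C everywhere
  have hDC : ∀ p, D p = ∑ i ∈ Finset.range N, min (f i) p := by
    intro p
    obtain ⟨v0, h0⟩ := hCeq p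
    obtain ⟨v1, h1⟩ := hex2 p
    have h2 := hle v0 p
    have h3 := hCle v1 p
    rw [← h0] at h2
    rw [← h1] at h3
    have e1 : D p ≤ ∑ i ∈ Finset.range N, min (f i) p := Nat.le_of_add_le_add_left h2
    have e2 : (∑ i ∈ Finset.range N, min (f i) p) ≤ D p := Nat.le_of_add_le_add_left h3
    omega
  -- conclude
  intro j
  have hD1 : D (j + 1) = D j + g j := by
    have h1 := hg j
    have h2 := hDmono (Nat.le_succ j)
    simp only [Nat.succ_eq_add_one] at h2
    omega
  have hC1 : (∑ i ∈ Finset.range N, min (f i) (j + 1)) =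
      (∑ i ∈ Finset.range N, min (f i) j) + ((Finset.range N).filter fun i => j + 1 ≤ f i).card := by
    rw [Finset.card_filter, ← Finset.sum_add_distrib]
    apply Finset.sum_congr rfl
    intro i _
    rcases le_or_gt (j + 1) (f i) with h | h
    · rw [if_pos h, min_eq_right (by omega : j + 1 ≤ f i), min_eq_right (by omega : j ≤ f i)]
    · rw [if_neg (not_le.2 h), min_eq_left (by omega : f i ≤ j + 1),
        min_eq_left (by omega : f i ≤ j)]
      omega
  have hgj : g j = ((Finset.range N).filter fun i => j + 1 ≤ f i).card := by
    have e1 := hDC j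
    have e2 := hDC (j + 1)
    omega
  have hset : {i : ℕ | j + 1 ≤ f i} = ↑((Finset.range N).filter fun i => j + 1 ≤ f i) := by
    ext i
    simp only [Set.mem_setOf_eq, Finset.coe_filter, Set.mem_setOf_eq, Finset.mem_range]
    constructor
    · intro h
      refine ⟨?_, h⟩
      by_contra hN'
      have := hfN i (le_of_not_gt hN')
      omega
    · exact fun h => h.2
  rw [hgj, hset, Nat.card_coe_set_eq, Set.ncard_coe_finset]
end
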